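/- Let δ > 0, let h : ℝ → ℝ be continuous at 0 and differentiable on (−δ,0) ∪ (0,δ), with one-sided derivative limits h′(0⁺) = lim_{x↓0} h′(x) and h′(0⁻) = lim_{x↑0} h′(x) existing and satisfying h′(0⁺) ≠ h′(0⁻). Let f : ℝ × ℝ → ℝ be continuous on ℝ × (−δ,δ) with continuous x-partial derivative dominated by an integrable function of v, with v ↦ f(v,x) integrable on (−∞,h(x)) for each x, and f(h(0),0) > 0. Let F : ℝ × ℝ × ℝ → ℝ be such that for each y, (v,x) ↦ f(v,x)·F(y,v,x) satisfies the same continuity, differentiability, domination, and integrability conditions, and suppose x ↦ ∫_{−∞}^{h(x)} (∂f/∂x)(v,x) dv and x ↦ ∫_{−∞}^{h(x)} ∂/∂x[f(v,x)F(y,v,x)] dv are continuous at 0. Define μ₂(x) = ∫_{−∞}^{h(x)} f(v,x) dv and μ₁(x,y) = ∫_{−∞}^{h(x)} f(v,x)·F(y,v,x) dv. Then for every y ∈ ℝ, [lim_{x↓0} ∂μ₁/∂x(x,y) − lim_{x↑0} ∂μ₁/∂x(x,y)] / [lim_{x↓0} μ₂′(x) − lim_{x↑0} μ₂′(x)] =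 F(y, h(0), 0). -/

import Mathlib

open MeasureTheory Set Filter Topology
open Asymptotics

lemma aux_uIoc {a b v : ℝ} (hv : v ∈ Set.uIoc a b) : |v - a| ≤ |b - a| := by
  rw [Set.mem_uIoc] at hv
  rcases hv with ⟨h1, h2⟩ | ⟨h1, h2⟩
  · calc |v - a| = v - a := abs_of_nonneg (by linarith)
      _ ≤ b - a := by linarith
      _ ≤ |b - a| := le_abs_self _
  · calc |v - a| = -(v - a) := abs_of_nonpos (by linarith)
      _ ≤ -(b - a) := by linarith
      _ ≤ |b - a| := neg_le_abs _

-- helper: continuous + integrable on Iio b ⇒ integrable on Iic a for all a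
lemma aux_int_Iic {φ : ℝ → ℝ} (hc : Continuous φ) {b : ℝ}
    (hi : IntegrableOn φ (Iio b)) (a : ℝ) : IntegrableOn φ (Iic a) := by
  have hIicb : IntegrableOn φ (Iic b) := by
    rw [IntegrableOn, MeasureTheory.restrict_Iio_eq_restrict_Iic] at hi
    exact hi
  have h2 : IntegrableOn φ (Ioc b (max a b)) := hc.continuousOn.integrableOn_Icc.mono_set Ioc_subset_Icc_self
  have : IntegrableOn φ (Iic (max a b)) := by
    rw [← Iic_union_Ioc_eq_Iic (le_max_right a b)]
    exact hIicb.union h2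
  exact this.mono_set (Iic_subset_Iic.mpr (le_max_left a b))

lemma key_hasDerivAt
    (δ : ℝ) (h h' : ℝ → ℝ) (g g' : ℝ → ℝ → ℝ)
    (hg_cont : ContinuousOn (fun p : ℝ × ℝ => g p.1 p.2) ((univ : Set ℝ) ×ˢ Ioo (-δ) δ))
    (hg_deriv : ∀ v : ℝ, ∀ x ∈ Ioo (-δ) δ, HasDerivAt (fun t => g v t) (g' v x) x)
    (hg'_cont : ContinuousOn (fun p : ℝ × ℝ => g' p.1 p.2) ((univ : Set ℝ) ×ˢ Ioo (-δ) δ))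
    (G : ℝ → ℝ) (hG : Integrable G)
    (hdom : ∀ v, ∀ x ∈ Ioo (-δ) δ, |g' v x| ≤ G v)
    (hint : ∀ x ∈ Ioo (-δ) δ, IntegrableOn (fun v => g v x) (Iio (h x)))
    (x₀ : ℝ) (hx₀ : x₀ ∈ Ioo (-δ) δ)
    (hhd : HasDerivAt h (h' x₀) x₀) :
    HasDerivAt (fun x => ∫ v in Iio (h x), g v x)
      (g (h x₀) x₀ * h' x₀ + ∫ v in Iio (h x₀), g' v x₀) x₀ := by
  have hopen : IsOpen ((univ : Set ℝ) ×ˢ Ioo (-δ) δ) := isOpen_univ.prod isOpen_Ioo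
  -- pointwise-in-x continuity of g in v
  have hgc : ∀ x ∈ Ioo (-δ) δ, Continuous (fun v => g v x) := by
    intro x hx
    rw [continuous_iff_continuousAt]
    intro v
    have h1 := (hg_cont.continuousAt (hopen.mem_nhds (by simp [hx]) : _ ∈ 𝓝 ((v, x) : ℝ × ℝ)))
    have h2 : ContinuousAt (fun w : ℝ => ((w, x) : ℝ × ℝ)) v :=
      (continuous_id.prodMk continuous_const).continuousAt
    exact ContinuousAt.comp (x := v) h1 h2
  have hg'c : ∀ x ∈ Ioo (-δ) δ, Continuous (fun v => g' v x) := by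
    intro x hx
    rw [continuous_iff_continuousAt]
    intro v
    have h1 := (hg'_cont.continuousAt (hopen.mem_nhds (by simp [hx]) : _ ∈ 𝓝 ((v, x) : ℝ × ℝ)))
    have h2 : ContinuousAt (fun w : ℝ => ((w, x) : ℝ × ℝ)) v :=
      (continuous_id.prodMk continuous_const).continuousAt
    exact ContinuousAt.comp (x := v) h1 h2
  set a₀ := h x₀ with ha₀
  -- splitting
  have hsplit : ∀ x ∈ Ioo (-δ) δ, (∫ v in Iio (h x), g v x)
      = (∫ v in Iio a₀, g v x) + ∫ v in a₀..(h x), g v x := by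
    intro x hx
    have h1 : IntegrableOn (fun v => g v x) (Iic a₀) := aux_int_Iic (hgc x hx) (hint x hx) _
    have h2 : IntegrableOn (fun v => g v x) (Iic (h x)) := aux_int_Iic (hgc x hx) (hint x hx) _
    rw [← integral_Iic_eq_integral_Iio, ← integral_Iic_eq_integral_Iio,
      ← intervalIntegral.integral_Iic_sub_Iic h1 h2]
    ring
  -- choose ε ball inside Ioo
  obtain ⟨ε, hε, hball⟩ := Metric.isOpen_iff.mp isOpen_Ioo x₀ hx₀
  -- A part
  have hA : HasDerivAt (fun x => ∫ v in Iio a₀, g v x) (∫ v in Iio a₀, g' v x₀) x₀ := by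
    refine (hasDerivAt_integral_of_dominated_loc_of_deriv_le (F := fun x v => g v x)
      (F' := fun x v => g' v x) (bound := G) (Metric.ball_mem_nhds x₀ hε) ?_ ?_ ?_ ?_ ?_ ?_).2
    · filter_upwards [isOpen_Ioo.mem_nhds hx₀] with x hx
      exact ((hgc x hx).aestronglyMeasurable).restrict
    · exact hint x₀ hx₀
    · exact ((hg'c x₀ hx₀).aestronglyMeasurable).restrict
    · filter_upwards with v
      intro x hx
      exact hdom v x (hball hx)
    · exact hG.restrict
    · filter_upwards with v
      intro x hx
      exact hg_deriv v x (hball hx)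
  -- B part
  have hB : HasDerivAt (fun x => ∫ v in a₀..(h x), g v x) (g a₀ x₀ * h' x₀) x₀ := by
    rw [hasDerivAt_iff_isLittleO]
    have hO := hhd.isBigO_sub
    obtain ⟨C, hC, hCO⟩ := hO.exists_pos
    rw [Asymptotics.isBigOWith_iff] at hCO
    have hder := hasDerivAt_iff_isLittleO.mp hhd
    have h2o := hder.const_mul_left (g a₀ x₀)
    have h1o : (fun x => (∫ v in a₀..h x, g v x) - (h x - a₀) * g a₀ x₀)
        =o[𝓝 x₀] (fun x => x - x₀) := by
      rw [Asymptotics.isLittleO_iff]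
      intro c hc
      have hgp : ContinuousAt (fun p : ℝ × ℝ => g p.1 p.2) (a₀, x₀) :=
        hg_cont.continuousAt (hopen.mem_nhds (by simp [hx₀]))
      rw [Metric.continuousAt_iff] at hgp
      obtain ⟨r, hr, hgr⟩ := hgp (c / C) (div_pos hc hC)
      have hev1 : ∀ᶠ x in 𝓝 x₀, |h x - a₀| < r := by
        have hhc : ContinuousAt h x₀ := hhd.continuousAt
        have := hhc (Metric.ball_mem_nhds (h x₀) hr)
        filter_upwards [this] with x hx
        simpa [Real.dist_eq] using hx
      filter_upwards [hev1, isOpen_Ioo.mem_nhds hx₀, hCO, Metric.ball_mem_nhds x₀ hr]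
        with x h1 h2 h3 h4
      have hii : IntervalIntegrable (fun v => g v x) volume a₀ (h x) :=
        (hgc x h2).intervalIntegrable _ _
      have heq1 : (∫ v in a₀..h x, g v x) - (h x - a₀) * g a₀ x₀
          = ∫ v in a₀..h x, (g v x - g a₀ x₀) := by
        rw [intervalIntegral.integral_sub hii intervalIntegrable_const,
          intervalIntegral.integral_const, smul_eq_mul]
      rw [heq1]
      have hbound : ∀ v ∈ Set.uIoc a₀ (h x), ‖g v x - g a₀ x₀‖ ≤ c / C := by
        intro v hv
        have hva : |v - a₀| < r := lt_of_le_of_lt (aux_uIoc hv) h1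
        have hd : dist ((v, x) : ℝ × ℝ) (a₀, x₀) < r := by
          rw [Prod.dist_eq]
          exact max_lt (by simpa [Real.dist_eq] using hva) h4
        have := hgr hd
        rw [Real.dist_eq] at this
        exact le_of_lt this
      calc ‖∫ v in a₀..h x, (g v x - g a₀ x₀)‖
          ≤ (c / C) * |h x - a₀| :=
            intervalIntegral.norm_integral_le_of_norm_le_const hbound
        _ ≤ (c / C) * (C * ‖x - x₀‖) := by
            apply mul_le_mul_of_nonneg_left _ (le_of_lt (div_pos hc hC))
            simpa [Real.norm_eq_abs] using h3
        _ = c * ‖x - x₀‖ := by rw [← mul_assoc, div_mul_cancel₀ c hC.ne']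
    have hsum := h1o.add h2o
    refine hsum.congr' ?_ (by rfl)
    have hz : (∫ v in a₀..h x₀, g v x₀) = 0 := by
      rw [← ha₀, intervalIntegral.integral_same]
    filter_upwards with x
    simp only [hz, smul_eq_mul]
    ring
  have hAB := hA.add hB
  have heq : (fun x => ∫ v in Iio (h x), g v x)
      =ᶠ[𝓝 x₀] (fun x => (∫ v in Iio a₀, g v x) + ∫ v in a₀..h x, g v x) := by
    filter_upwards [isOpen_Ioo.mem_nhds hx₀] with x hx using hsplit x hx
  rw [add_comm]
  exact hAB.congr_of_eventuallyEq heq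

/-- Identification theorem (treated arm) for the fuzzy regression kink design:
with `μ₂(x) = ∫_{-∞}^{h(x)} f(v,x) dv` and `μ₁(x,y) = ∫_{-∞}^{h(x)} f(v,x)·F(y,v,x) dv`,
the local Wald ratio of the kink differences of the derivatives identifies `F(y,h(0),0)`:
`[lim_{x↓0} ∂μ₁/∂x − lim_{x↑0} ∂μ₁/∂x] / [lim_{x↓0} μ₂' − lim_{x↑0} μ₂'] = F(y,h(0),0)`.
Here `f'` is `∂f/∂x` and `P' y` is `∂/∂x [f(v,x)·F(y,v,x)]`. -/
theorem statement4
    (δ : ℝ) (hδ : 0 < δ)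
    (h h' : ℝ → ℝ)
    (hcont : ContinuousAt h 0)
    (hh : ∀ x ∈ Ioo (-δ) δ \ {0}, HasDerivAt h (h' x) x)
    (hp hm : ℝ)
    (hhp : Tendsto h' (𝓝[>] (0:ℝ)) (𝓝 hp))
    (hhm : Tendsto h' (𝓝[<] (0:ℝ)) (𝓝 hm))
    (hkink : hp ≠ hm)
    (f f' : ℝ → ℝ → ℝ)
    (hf_cont : ContinuousOn (fun p : ℝ × ℝ => f p.1 p.2) ((univ : Set ℝ) ×ˢ Ioo (-δ) δ))
    (hf_deriv : ∀ v : ℝ, ∀ x ∈ Ioo (-δ) δ, HasDerivAt (fun t => f v t) (f' v x) x)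
    (hf'_cont : ContinuousOn (fun p : ℝ × ℝ => f' p.1 p.2) ((univ : Set ℝ) ×ˢ Ioo (-δ) δ))
    (G : ℝ → ℝ) (hG : Integrable G)
    (hdom : ∀ (v : ℝ), ∀ x ∈ Ioo (-δ) δ, |f' v x| ≤ G v)
    (hint : ∀ x ∈ Ioo (-δ) δ, IntegrableOn (fun v => f v x) (Iio (h x)))
    (hfpos : 0 < f (h 0) 0)
    (F : ℝ → ℝ → ℝ → ℝ) (P' : ℝ → ℝ → ℝ → ℝ)
    (hP_cont : ∀ y : ℝ, ContinuousOn (fun p : ℝ × ℝ => f p.1 p.2 * F y p.1 p.2)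
      ((univ : Set ℝ) ×ˢ Ioo (-δ) δ))
    (hP_deriv : ∀ (y v : ℝ), ∀ x ∈ Ioo (-δ) δ,
      HasDerivAt (fun t => f v t * F y v t) (P' y v x) x)
    (hP'_cont : ∀ y : ℝ, ContinuousOn (fun p : ℝ × ℝ => P' y p.1 p.2)
      ((univ : Set ℝ) ×ˢ Ioo (-δ) δ))
    (hPdom : ∀ y : ℝ, ∃ Gy : ℝ → ℝ, Integrable Gy ∧
      ∀ (v : ℝ), ∀ x ∈ Ioo (-δ) δ, |P' y v x| ≤ Gy v)
    (hPint : ∀ (y : ℝ), ∀ x ∈ Ioo (-δ) δ,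
      IntegrableOn (fun v => f v x * F y v x) (Iio (h x)))
    (hIcont2 : ContinuousAt (fun x => ∫ v in Iio (h x), f' v x) 0)
    (hIcont1 : ∀ y : ℝ, ContinuousAt (fun x => ∫ v in Iio (h x), P' y v x) 0) :
    ∀ y : ℝ, ∃ Np Nm Dp Dm : ℝ,
      Tendsto (fun x => deriv (fun t => ∫ v in Iio (h t), f v t * F y v t) x)
        (𝓝[>] (0:ℝ)) (𝓝 Np) ∧
      Tendsto (fun x => deriv (fun t => ∫ v in Iio (h t), f v t * F y v t) x)
        (𝓝[<] (0:ℝ)) (𝓝 Nm) ∧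
      Tendsto (fun x => deriv (fun t => ∫ v in Iio (h t), f v t) x)
        (𝓝[>] (0:ℝ)) (𝓝 Dp) ∧
      Tendsto (fun x => deriv (fun t => ∫ v in Iio (h t), f v t) x)
        (𝓝[<] (0:ℝ)) (𝓝 Dm) ∧
      (Np - Nm) / (Dp - Dm) = F y (h 0) 0 := by
  intro y
  obtain ⟨Gy, hGy, hGydom⟩ := hPdom y
  have h0mem : (0:ℝ) ∈ Ioo (-δ) δ := ⟨by linarith, hδ⟩
  have hopen : IsOpen ((univ : Set ℝ) ×ˢ Ioo (-δ) δ) := isOpen_univ.prod isOpen_Ioo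
  -- derivative formulas on the punctured interval
  have HD2 : ∀ x ∈ Ioo (-δ) δ \ {0}, HasDerivAt (fun t => ∫ v in Iio (h t), f v t)
      (f (h x) x * h' x + ∫ v in Iio (h x), f' v x) x := fun x hx =>
    key_hasDerivAt δ h h' f f' hf_cont hf_deriv hf'_cont G hG hdom hint x hx.1 (hh x hx)
  have HD1 : ∀ x ∈ Ioo (-δ) δ \ {0}, HasDerivAt (fun t => ∫ v in Iio (h t), f v t * F y v t)
      (f (h x) x * F y (h x) x * h' x + ∫ v in Iio (h x), P' y v x) x := fun x hx =>
    key_hasDerivAt δ h h' (fun v t => f v t * F y v t) (P' y) (hP_cont y) (hP_deriv y)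
      (hP'_cont y) Gy hGy hGydom (hPint y) x hx.1 (hh x hx)
  -- memberships
  have hmemR : ∀ x ∈ Ioo (0:ℝ) δ, x ∈ Ioo (-δ) δ \ {0} := by
    intro x hx
    refine ⟨⟨by linarith [hx.1], hx.2⟩, ?_⟩
    simp [ne_of_gt hx.1]
  have hmemL : ∀ x ∈ Ioo (-δ) (0:ℝ), x ∈ Ioo (-δ) δ \ {0} := by
    intro x hx
    refine ⟨⟨hx.1, by linarith [hx.2]⟩, ?_⟩
    simp [ne_of_lt hx.2]
  -- eventual equality of deriv with the formula
  have hDevR : (fun x => deriv (fun t => ∫ v in Iio (h t), f v t) x)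
      =ᶠ[𝓝[>] (0:ℝ)] (fun x => f (h x) x * h' x + ∫ v in Iio (h x), f' v x) := by
    filter_upwards [Ioo_mem_nhdsGT_of_mem (⟨le_refl (0:ℝ), hδ⟩ : (0:ℝ) ∈ Ico 0 δ)] with x hx
    exact (HD2 x (hmemR x hx)).deriv
  have hDevL : (fun x => deriv (fun t => ∫ v in Iio (h t), f v t) x)
      =ᶠ[𝓝[<] (0:ℝ)] (fun x => f (h x) x * h' x + ∫ v in Iio (h x), f' v x) := by
    filter_upwards [Ioo_mem_nhdsLT_of_mem (⟨neg_lt_zero.mpr hδ, le_refl (0:ℝ)⟩ : (0:ℝ) ∈ Ioc (-δ) 0)] with x hx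
    exact (HD2 x (hmemL x hx)).deriv
  have hNevR : (fun x => deriv (fun t => ∫ v in Iio (h t), f v t * F y v t) x)
      =ᶠ[𝓝[>] (0:ℝ)] (fun x => f (h x) x * F y (h x) x * h' x + ∫ v in Iio (h x), P' y v x) := by
    filter_upwards [Ioo_mem_nhdsGT_of_mem (⟨le_refl (0:ℝ), hδ⟩ : (0:ℝ) ∈ Ico 0 δ)] with x hx
    exact (HD1 x (hmemR x hx)).deriv
  have hNevL : (fun x => deriv (fun t => ∫ v in Iio (h t), f v t * F y v t) x)
      =ᶠ[𝓝[<] (0:ℝ)] (fun x => f (h x) x * F y (h x) x * h' x + ∫ v in Iio (h x), P' y v x) := by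
    filter_upwards [Ioo_mem_nhdsLT_of_mem (⟨neg_lt_zero.mpr hδ, le_refl (0:ℝ)⟩ : (0:ℝ) ∈ Ioc (-δ) 0)] with x hx
    exact (HD1 x (hmemL x hx)).deriv
  -- limits of building blocks
  have hpair : Tendsto (fun x => ((h x, x) : ℝ × ℝ)) (𝓝 0) (𝓝 (h 0, 0)) :=
    hcont.prodMk_nhds tendsto_id
  have hfh : Tendsto (fun x => f (h x) x) (𝓝 (0:ℝ)) (𝓝 (f (h 0) 0)) := by
    have hpt : ContinuousAt (fun p : ℝ × ℝ => f p.1 p.2) (h 0, 0) :=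
      hf_cont.continuousAt (hopen.mem_nhds (by simp [h0mem]))
    exact hpt.tendsto.comp hpair
  have hfFh : Tendsto (fun x => f (h x) x * F y (h x) x) (𝓝 (0:ℝ))
      (𝓝 (f (h 0) 0 * F y (h 0) 0)) := by
    have hpt : ContinuousAt (fun p : ℝ × ℝ => f p.1 p.2 * F y p.1 p.2) (h 0, 0) :=
      (hP_cont y).continuousAt (hopen.mem_nhds (by simp [h0mem]))
    exact hpt.tendsto.comp hpair
  have hI2 : Tendsto (fun x => ∫ v in Iio (h x), f' v x) (𝓝 (0:ℝ))
      (𝓝 (∫ v in Iio (h 0), f' v 0)) := hIcont2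
  have hI1 : Tendsto (fun x => ∫ v in Iio (h x), P' y v x) (𝓝 (0:ℝ))
      (𝓝 (∫ v in Iio (h 0), P' y v 0)) := hIcont1 y
  set c₀ := f (h 0) 0 with hc₀
  set Fy := F y (h 0) 0 with hFy
  set L₀ := ∫ v in Iio (h 0), f' v 0 with hL₀
  set L₁ := ∫ v in Iio (h 0), P' y v 0 with hL₁
  refine ⟨c₀ * Fy * hp + L₁, c₀ * Fy * hm + L₁, c₀ * hp + L₀, c₀ * hm + L₀, ?_, ?_, ?_, ?_, ?_⟩
  · refine Tendsto.congr' hNevR.symm ?_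
    exact (Tendsto.mul (hfFh.mono_left nhdsWithin_le_nhds) hhp).add
      (hI1.mono_left nhdsWithin_le_nhds)
  · refine Tendsto.congr' hNevL.symm ?_
    exact (Tendsto.mul (hfFh.mono_left nhdsWithin_le_nhds) hhm).add
      (hI1.mono_left nhdsWithin_le_nhds)
  · refine Tendsto.congr' hDevR.symm ?_
    exact (Tendsto.mul (hfh.mono_left nhdsWithin_le_nhds) hhp).add
      (hI2.mono_left nhdsWithin_le_nhds)
  · refine Tendsto.congr' hDevL.symm ?_
    exact (Tendsto.mul (hfh.mono_left nhdsWithin_le_nhds) hhm).add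
      (hI2.mono_left nhdsWithin_le_nhds)
  · have h1 : hp - hm ≠ 0 := sub_ne_zero.mpr hkink
    have h2 : c₀ ≠ 0 := ne_of_gt hfpos
    rw [show c₀ * Fy * hp + L₁ - (c₀ * Fy * hm + L₁) = Fy * (c₀ * (hp - hm)) by ring,
      show c₀ * hp + L₀ - (c₀ * hm + L₀) = c₀ * (hp - hm) by ring,
      mul_div_assoc, div_self (mul_ne_zero h2 h1), mul_one]
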